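/- Let α > 1. The function Ψ is finite, continuous and strictly decreasing on (0, ∞), Ψ(x) → +∞ as x → 0⁺ and Ψ(x) → 0 as x → +∞. Consequently, for every β > 0 there exists a unique ρ(β) > 0 such that β·Ψ(ρ(β)·β^α) = 1. -/

import Mathlib

open MeasureTheory Real Filter Set

/-- `g(u) = ∫₀ᵘ v^α/(1-v) dv`. -/
noncomputable def gfun (α : ℝ) (u : ℝ) : ℝ := ∫ v in (0:ℝ)..u, v ^ α / (1 - v)

/-- `Ψ(x) = ∫₀¹ (1-u)⁻¹ exp(-x g(u)) du`. -/
noncomputable def Psi (α : ℝ) (x : ℝ) : ℝ :=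
  ∫ u in (0:ℝ)..1, (1 - u)⁻¹ * Real.exp (-x * gfun α u)

/-!
Comparing the integrand of `g` with `(1 - v)⁻¹` gives `-log (1 - u) - α ≤ g u ≤ -log (1 - u)`,
the lower bound by Bernoulli's inequality `v ^ α ≥ 1 - α (1 - v)`. So the integrand of `Ψ x` lies
between `(1 - u) ^ (x - 1)` and `exp (α x) (1 - u) ^ (x - 1)`: it is integrable, and `Ψ x ≥ 1 / x`
blows up at `0`. The integrand decreases in `x`, so for `x ≥ x₀` it is dominated by its value at
`x₀`, and continuity and `Ψ x → 0` follow by dominated convergence; strict decrease comes from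
`g > 0` on `(0, 1)`. The fixed point equation is then solved by the intermediate value theorem,
uniquely by strict monotonicity.
-/

open intervalIntegral Topology
open scoped Interval

lemma existsUnique_pos_eq_of_strictAntiOn {f : ℝ → ℝ} (hcont : ContinuousOn f (Ioi 0))
    (hanti : StrictAntiOn f (Ioi 0)) (hzero : Tendsto f (𝓝[>] 0) atTop)
    (htop : Tendsto f atTop (𝓝 0)) {c : ℝ} (hc : 0 < c) : ∃! x, 0 < x ∧ f x = c := by
  obtain ⟨a, hca, ha⟩ := ((hzero.eventually_gt_atTop c).and self_mem_nhdsWithin).exists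
  obtain ⟨b, hbc, hab⟩ := ((htop.eventually_lt_const hc).and (eventually_gt_atTop a)).exists
  obtain ⟨x, hx, hfx⟩ := intermediate_value_Icc' hab.le
    (hcont.mono fun _ ht => lt_of_lt_of_le ha ht.1) ⟨hbc.le, hca.le⟩
  have hx0 : 0 < x := lt_of_lt_of_le ha hx.1
  exact ⟨x, ⟨hx0, hfx⟩, fun y hy => hanti.injOn hy.1 hx0 (hy.2.trans hfx.symm)⟩

section gfun

variable {α u : ℝ}

lemma continuousOn_rpow_div_one_sub (hα : 0 ≤ α) :
    ContinuousOn (fun v : ℝ => v ^ α / (1 - v)) (Iio 1) :=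
  (continuous_rpow_const hα).continuousOn.div (by fun_prop) fun _ hv =>
    sub_ne_zero.2 (ne_of_lt hv).symm

lemma uIcc_zero_subset_Iio_one (hu : u < 1) : [[0, u]] ⊆ Iio 1 := fun _ hv =>
  hv.2.trans_lt (max_lt one_pos hu)

lemma hasDerivAt_gfun (hα : 0 ≤ α) (hu : u < 1) : HasDerivAt (gfun α) (u ^ α / (1 - u)) u :=
  integral_hasDerivAt_right
    ((continuousOn_rpow_div_one_sub hα).mono (uIcc_zero_subset_Iio_one hu)).intervalIntegrable
    ((continuousOn_rpow_div_one_sub hα).stronglyMeasurableAtFilter isOpen_Iio u hu)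
    ((continuousOn_rpow_div_one_sub hα).continuousAt (Iio_mem_nhds hu))

lemma continuousOn_gfun (hα : 0 ≤ α) : ContinuousOn (gfun α) (Iio 1) := fun _ hu =>
  (hasDerivAt_gfun hα hu).continuousAt.continuousWithinAt

lemma gfun_nonneg (h0 : 0 ≤ u) (h1 : u ≤ 1) : 0 ≤ gfun α u :=
  integral_nonneg h0 fun v hv => div_nonneg (rpow_nonneg hv.1 α) (by linarith [hv.2])

lemma gfun_pos (hα : 0 ≤ α) (h0 : 0 < u) (h1 : u < 1) : 0 < gfun α u :=
  intervalIntegral_pos_of_pos_on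
    ((continuousOn_rpow_div_one_sub hα).mono (uIcc_zero_subset_Iio_one h1)).intervalIntegrable
    (fun v hv => div_pos (rpow_pos_of_pos hv.1 α) (by linarith [hv.2])) h0

lemma integral_inv_one_sub (hu : u < 1) : ∫ v in (0:ℝ)..u, (1 - v)⁻¹ = -log (1 - u) := by
  rw [integral_comp_sub_left (fun t => t⁻¹), sub_zero,
    integral_inv_of_pos (by linarith) one_pos, one_div, log_inv]

lemma continuousOn_inv_one_sub : ContinuousOn (fun v : ℝ => (1 - v)⁻¹) (Iio 1) :=
  (continuousOn_const.sub continuousOn_id).inv₀ fun _ hv => sub_ne_zero.2 (ne_of_lt hv).symm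

lemma intervalIntegrable_inv_one_sub (hu : u < 1) :
    IntervalIntegrable (fun v : ℝ => (1 - v)⁻¹) volume 0 u :=
  (continuousOn_inv_one_sub.mono (uIcc_zero_subset_Iio_one hu)).intervalIntegrable

lemma gfun_le_neg_log (hα : 0 ≤ α) (h0 : 0 ≤ u) (h1 : u < 1) : gfun α u ≤ -log (1 - u) := by
  rw [← integral_inv_one_sub h1]
  refine integral_mono_on h0
    ((continuousOn_rpow_div_one_sub hα).mono (uIcc_zero_subset_Iio_one h1)).intervalIntegrable
    (intervalIntegrable_inv_one_sub h1) fun v hv => ?_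
  rw [div_eq_mul_inv]
  exact mul_le_of_le_one_left (inv_nonneg.2 (by linarith [hv.2]))
    (rpow_le_one hv.1 (by linarith [hv.2]) hα)

lemma neg_log_sub_le_gfun (hα : 1 ≤ α) (h0 : 0 ≤ u) (h1 : u < 1) :
    -log (1 - u) - α ≤ gfun α u := by
  have hα0 : 0 ≤ α := zero_le_one.trans hα
  have key : ∫ v in (0:ℝ)..u, ((1 - v)⁻¹ - α) ≤ gfun α u := by
    refine integral_mono_on h0 ((intervalIntegrable_inv_one_sub h1).sub intervalIntegrable_const)
      ((continuousOn_rpow_div_one_sub hα0).mono (uIcc_zero_subset_Iio_one h1)).intervalIntegrable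
      fun v hv => ?_
    have hv1 : 0 < 1 - v := by linarith [hv.2]
    have bernoulli := one_add_mul_self_le_rpow_one_add (s := v - 1) (by linarith [hv.1]) hα
    rw [add_sub_cancel] at bernoulli
    rw [le_div_iff₀ hv1, sub_mul, inv_mul_cancel₀ hv1.ne']
    linarith
  rw [integral_sub (intervalIntegrable_inv_one_sub h1) intervalIntegrable_const,
    integral_inv_one_sub h1, intervalIntegral.integral_const, smul_eq_mul, sub_zero] at key
  linarith [mul_le_of_le_one_left hα0 h1.le]

end gfun

-- Since `(1 - 1)⁻¹ = 0`, it vanishes at `u = 1`, so the bounds below hold on all of `[0, 1]`.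
noncomputable def psiIntegrand (α x u : ℝ) : ℝ := (1 - u)⁻¹ * exp (-x * gfun α u)

section psiIntegrand

variable {α x y u : ℝ}

lemma psiIntegrand_nonneg (hu : u ≤ 1) : 0 ≤ psiIntegrand α x u :=
  mul_nonneg (inv_nonneg.2 (sub_nonneg.2 hu)) (exp_pos _).le

lemma psiIntegrand_anti (hxy : x ≤ y) (hu : u ∈ Icc (0:ℝ) 1) :
    psiIntegrand α y u ≤ psiIntegrand α x u :=
  mul_le_mul_of_nonneg_left (exp_le_exp.2 (by nlinarith [gfun_nonneg (α := α) hu.1 hu.2]))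
    (inv_nonneg.2 (sub_nonneg.2 hu.2))

lemma psiIntegrand_strictAnti (hα : 0 ≤ α) (hxy : x < y) (hu : u ∈ Ioo (0:ℝ) 1) :
    psiIntegrand α y u < psiIntegrand α x u :=
  mul_lt_mul_of_pos_left (exp_lt_exp.2 (by nlinarith [gfun_pos hα hu.1 hu.2]))
    (inv_pos.2 (sub_pos.2 hu.2))

lemma norm_psiIntegrand_le (hxy : x ≤ y) (hu : u ∈ Ι (0:ℝ) 1) :
    ‖psiIntegrand α y u‖ ≤ psiIntegrand α x u := by
  rw [uIoc_of_le zero_le_one] at hu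
  rw [norm_of_nonneg (psiIntegrand_nonneg hu.2)]
  exact psiIntegrand_anti hxy (Ioc_subset_Icc_self hu)

lemma one_sub_rpow_sub_one_eq_inv_mul_exp (hu : u < 1) :
    (1 - u) ^ (x - 1) = (1 - u)⁻¹ * exp (x * log (1 - u)) := by
  rw [rpow_sub (sub_pos.2 hu), rpow_one, rpow_def_of_pos (sub_pos.2 hu), mul_comm (log _),
    div_eq_inv_mul]

lemma one_sub_rpow_le_psiIntegrand (hα : 0 ≤ α) (hx : 0 ≤ x) (hu : u ∈ Ico (0:ℝ) 1) :
    (1 - u) ^ (x - 1) ≤ psiIntegrand α x u := by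
  rw [one_sub_rpow_sub_one_eq_inv_mul_exp hu.2]
  refine mul_le_mul_of_nonneg_left (exp_le_exp.2 ?_) (inv_nonneg.2 (sub_nonneg.2 hu.2.le))
  nlinarith [gfun_le_neg_log hα hu.1 hu.2]

lemma psiIntegrand_le_one_sub_rpow (hα : 1 ≤ α) (hx : 0 ≤ x) (hu : u ∈ Icc (0:ℝ) 1) :
    psiIntegrand α x u ≤ exp (α * x) * (1 - u) ^ (x - 1) := by
  rcases hu.2.eq_or_lt with rfl | hu1
  · simp only [psiIntegrand, sub_self, inv_zero, zero_mul]
    positivity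
  rw [one_sub_rpow_sub_one_eq_inv_mul_exp hu1, mul_left_comm, ← exp_add]
  refine mul_le_mul_of_nonneg_left (exp_le_exp.2 ?_) (inv_nonneg.2 (sub_nonneg.2 hu1.le))
  nlinarith [neg_log_sub_le_gfun hα hu.1 hu1]

lemma tendsto_psiIntegrand_atTop (hα : 0 ≤ α) (hu : u ∈ Ι (0:ℝ) 1) :
    Tendsto (fun x => psiIntegrand α x u) atTop (𝓝 0) := by
  rw [uIoc_of_le zero_le_one] at hu
  rcases hu.2.eq_or_lt with rfl | hu1
  · simp [psiIntegrand]
  unfold psiIntegrand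
  have hlin : Tendsto (fun x => -x * gfun α u) atTop atBot := by
    simpa only [neg_mul, mul_neg, id] using
      tendsto_id.atTop_mul_const_of_neg (neg_neg_of_pos (gfun_pos hα hu.1 hu1))
  simpa only [mul_zero, Function.comp_apply] using
    (tendsto_exp_atBot.comp hlin).const_mul (1 - u)⁻¹

lemma continuousOn_psiIntegrand (hα : 0 ≤ α) (x : ℝ) : ContinuousOn (psiIntegrand α x) (Iio 1) :=
  continuousOn_inv_one_sub.mul (continuous_exp.comp_continuousOn
    (continuousOn_const.mul (continuousOn_gfun hα)))

lemma aestronglyMeasurable_psiIntegrand (hα : 0 ≤ α) (x : ℝ) :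
    AEStronglyMeasurable (psiIntegrand α x) (volume.restrict (Ι 0 1)) := by
  rw [uIoc_of_le zero_le_one, ← Measure.restrict_congr_set Ioo_ae_eq_Ioc]
  exact ((continuousOn_psiIntegrand hα x).mono fun _ hu => hu.2).aestronglyMeasurable
    measurableSet_Ioo

lemma intervalIntegrable_one_sub_rpow (hx : 0 < x) :
    IntervalIntegrable (fun u : ℝ => (1 - u) ^ (x - 1)) volume 0 1 := by
  have hr : (-1:ℝ) < x - 1 := by linarith
  simpa using ((intervalIntegrable_rpow' (a := 0) (b := 1) hr).comp_sub_left 1).symm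

lemma integral_one_sub_rpow (hx : 0 < x) : ∫ u in (0:ℝ)..1, (1 - u) ^ (x - 1) = x⁻¹ := by
  rw [integral_comp_sub_left (fun t : ℝ => t ^ (x - 1)), sub_self, sub_zero,
    integral_rpow (Or.inl (by linarith)), sub_add_cancel, one_rpow, zero_rpow hx.ne', sub_zero,
    one_div]

lemma intervalIntegrable_psiIntegrand (hα : 1 ≤ α) (hx : 0 < x) :
    IntervalIntegrable (psiIntegrand α x) volume 0 1 :=
  ((intervalIntegrable_one_sub_rpow hx).const_mul (exp (α * x))).mono_fun'
    (aestronglyMeasurable_psiIntegrand (zero_le_one.trans hα) x)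
    (ae_restrict_of_forall_mem measurableSet_uIoc fun u hu => by
      rw [uIoc_of_le zero_le_one] at hu
      dsimp only
      rw [norm_of_nonneg (psiIntegrand_nonneg hu.2)]
      exact psiIntegrand_le_one_sub_rpow hα hx.le (Ioc_subset_Icc_self hu))

end psiIntegrand

section Psi

variable {α : ℝ}

lemma Psi_eq_integral_psiIntegrand (x : ℝ) : Psi α x = ∫ u in (0:ℝ)..1, psiIntegrand α x u := rfl

lemma inv_le_Psi (hα : 1 ≤ α) {x : ℝ} (hx : 0 < x) : x⁻¹ ≤ Psi α x := by
  rw [← integral_one_sub_rpow hx]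
  exact integral_mono_on_of_le_Ioo zero_le_one (intervalIntegrable_one_sub_rpow hx)
    (intervalIntegrable_psiIntegrand hα hx) fun u hu =>
      one_sub_rpow_le_psiIntegrand (zero_le_one.trans hα) hx.le (Ioo_subset_Ico_self hu)

lemma tendsto_Psi_nhdsGT_zero (hα : 1 ≤ α) : Tendsto (Psi α) (𝓝[>] 0) atTop :=
  tendsto_atTop_mono' _ (eventually_mem_nhdsWithin.mono fun _ hx => inv_le_Psi hα hx)
    tendsto_inv_nhdsGT_zero

lemma continuousOn_Psi (hα : 1 ≤ α) : ContinuousOn (Psi α) (Ioi 0) := fun x₀ (hx₀ : 0 < x₀) =>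
  (continuousAt_of_dominated_interval (F := fun x => psiIntegrand α x)
    (Eventually.of_forall (aestronglyMeasurable_psiIntegrand (zero_le_one.trans hα)))
    ((eventually_gt_nhds (half_lt_self hx₀)).mono fun _ hx => ae_of_all _ fun _ =>
      norm_psiIntegrand_le (le_of_lt hx))
    (intervalIntegrable_psiIntegrand hα (half_pos hx₀))
    (ae_of_all _ fun _ _ => by unfold psiIntegrand; fun_prop)).continuousWithinAt

lemma strictAntiOn_Psi (hα : 1 ≤ α) : StrictAntiOn (Psi α) (Ioi 0) := fun x hx y hy hxy => by
  rw [← sub_pos, Psi_eq_integral_psiIntegrand, Psi_eq_integral_psiIntegrand,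
    ← integral_sub (intervalIntegrable_psiIntegrand hα hx) (intervalIntegrable_psiIntegrand hα hy)]
  exact intervalIntegral_pos_of_pos_on
    ((intervalIntegrable_psiIntegrand hα hx).sub (intervalIntegrable_psiIntegrand hα hy))
    (fun u hu => sub_pos.2 (psiIntegrand_strictAnti (zero_le_one.trans hα) hxy hu)) one_pos

lemma tendsto_Psi_atTop (hα : 1 ≤ α) : Tendsto (Psi α) atTop (𝓝 0) := by
  have := tendsto_integral_filter_of_dominated_convergence (F := fun x => psiIntegrand α x)
    (fun u => psiIntegrand α 1 u)
    (Eventually.of_forall (aestronglyMeasurable_psiIntegrand (zero_le_one.trans hα)))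
    ((eventually_ge_atTop 1).mono fun _ hx => ae_of_all _ fun _ => norm_psiIntegrand_le hx)
    (intervalIntegrable_psiIntegrand hα one_pos)
    (ae_of_all _ fun _ => tendsto_psiIntegrand_atTop (zero_le_one.trans hα))
  rwa [intervalIntegral.integral_zero] at this

end Psi

/-- `Ψ` is finite (its integrand is integrable), continuous and
strictly decreasing on `(0,∞)`, `Ψ(x) → ∞` as `x → 0⁺` and `Ψ(x) → 0` as
`x → ∞`; consequently, for every `β > 0` there is a unique `ρ(β) > 0` with
`β Ψ(ρ(β) β^α) = 1`. -/
theorem Psi_properties (α : ℝ) (hα : 1 < α) :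
    (∀ x : ℝ, 0 < x →
      IntervalIntegrable (fun u => (1 - u)⁻¹ * Real.exp (-x * gfun α u))
        MeasureTheory.volume 0 1) ∧
    ContinuousOn (Psi α) (Set.Ioi 0) ∧
    StrictAntiOn (Psi α) (Set.Ioi 0) ∧
    Tendsto (Psi α) (nhdsWithin 0 (Set.Ioi 0)) atTop ∧
    Tendsto (Psi α) atTop (nhds 0) ∧
    (∀ β : ℝ, 0 < β → ∃! r : ℝ, 0 < r ∧ β * Psi α (r * β ^ α) = 1) := by
  refine ⟨fun x hx => intervalIntegrable_psiIntegrand hα.le hx, continuousOn_Psi hα.le,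
    strictAntiOn_Psi hα.le, tendsto_Psi_nhdsGT_zero hα.le, tendsto_Psi_atTop hα.le,
    fun β hβ => ?_⟩
  have hβα : 0 < β ^ α := rpow_pos_of_pos hβ α
  obtain ⟨y, ⟨hy0, hy⟩, huniq⟩ := existsUnique_pos_eq_of_strictAntiOn (continuousOn_Psi hα.le)
    (strictAntiOn_Psi hα.le) (tendsto_Psi_nhdsGT_zero hα.le) (tendsto_Psi_atTop hα.le)
    (inv_pos.2 hβ)
  refine ⟨y / β ^ α, ⟨div_pos hy0 hβα, ?_⟩, fun r ⟨hr, hrβ⟩ => ?_⟩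
  · rw [div_mul_cancel₀ y hβα.ne', hy, mul_inv_cancel₀ hβ.ne']
  · rw [eq_div_iff hβα.ne']
    exact huniq _ ⟨mul_pos hr hβα, eq_inv_of_mul_eq_one_right hrβ⟩
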